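/- The set NL_n = {(μ,ν,λ) in Par_n³ : N_{μ,ν,λ} > 0} is closed under componentwise addition of triples, i.e., it is a semigroup. In particular, if N_{μ,ν,λ} > 0 then N_{kμ,kν,kλ} > 0 for every positive integer k. -/

import Mathlib

open YoungDiagram

/-- An LR (Littlewood–Richardson) filling witnessing the Littlewood–Richardson
coefficient `c^lam_{μ,ν}`: a ballot (lattice-word) semistandard filling of the skew
shape `lam/μ` with content `ν`.  The entry in row `i`, column `j` is `T i j`;
entries are `≥ 1` on the cells of `lam/μ` and `0` elsewhere. -/
structure LRFilling (μ ν lam : YoungDiagram) : Type where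
  sub : μ ≤ lam
  T : ℕ → ℕ → ℕ
  supp : ∀ i j, T i j ≠ 0 ↔ ((i, j) ∈ lam ∧ (i, j) ∉ μ)
  rows_weak : ∀ i j₁ j₂, j₁ ≤ j₂ → T i j₁ ≠ 0 → T i j₂ ≠ 0 → T i j₁ ≤ T i j₂
  cols_strict : ∀ i₁ i₂ j, i₁ < i₂ → T i₁ j ≠ 0 → T i₂ j ≠ 0 → T i₁ j < T i₂ j
  content : ∀ k : ℕ, Nat.card {p : ℕ × ℕ // T p.1 p.2 = k + 1} = ν.rowLen k
  ballot : ∀ i j k : ℕ,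
    Nat.card {p : ℕ × ℕ // (p.1 < i ∨ (p.1 = i ∧ j ≤ p.2)) ∧ T p.1 p.2 = k + 2} ≤
      Nat.card {p : ℕ × ℕ // (p.1 < i ∨ (p.1 = i ∧ j ≤ p.2)) ∧ T p.1 p.2 = k + 1}

/-- The Littlewood–Richardson coefficient `c^lam_{μ,ν}`. -/
noncomputable def lrCoeff (μ ν lam : YoungDiagram) : ℕ := Nat.card (LRFilling μ ν lam)

/-- The Newell–Littlewood number
`N_{μ,ν,lam} = Σ_{α,β,γ} c^μ_{α,β} c^ν_{α,γ} c^lam_{β,γ}`,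
realized as the cardinality of the set of triples of LR fillings over all `α,β,γ`. -/
noncomputable def NL (μ ν lam : YoungDiagram) : ℕ :=
  Nat.card (Σ α β γ : YoungDiagram,
    (LRFilling α β μ × LRFilling α γ ν × LRFilling β γ lam))

/-! An LR filling of `μ/α` with content `β` is determined by its row counts `m i v`, the number of
entries `v + 1` in row `i`: row `i` consists of `α.rowLen i` blanks followed by these entries in
weakly increasing order. In terms of `m`, semistandardness, the lattice-word condition and the
content are linear inequalities and equations in the row lengths of `α`, `β`, `μ`, so the sum of
the row counts of fillings of `μ/α` and `μ'/α'` is the row count of a filling of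
`(μ + μ')/(α + α')` with content `β + β'`. Adding the three LR fillings witnessing `N_{μ,ν,λ} > 0`
to those witnessing `N_{μ',ν',λ'} > 0` gives witnesses for the sum; scaling is iterated addition.
-/

open Finset

namespace YoungDiagram

theorem ext_rowLen {μ ν : YoungDiagram} (h : ∀ i, μ.rowLen i = ν.rowLen i) : μ = ν := by
  ext ⟨i, j⟩
  simp only [mem_cells, mem_iff_lt_rowLen, h]

theorem le_iff_rowLen_le {μ ν : YoungDiagram} : μ ≤ ν ↔ ∀ i, μ.rowLen i ≤ ν.rowLen i := by
  refine ⟨fun h i => ?_, fun h ⟨i, j⟩ hij => ?_⟩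
  · by_contra! hlt
    exact (mem_iff_lt_rowLen.1 (h (mem_iff_lt_rowLen.2 hlt))).false
  · exact mem_iff_lt_rowLen.2 ((mem_iff_lt_rowLen.1 hij).trans_le (h i))

theorem rowLen_pos_iff {μ : YoungDiagram} {i : ℕ} : 0 < μ.rowLen i ↔ i < μ.colLen 0 := by
  rw [← mem_iff_lt_rowLen, mem_iff_lt_colLen]

theorem lt_colLen_zero_and_lt_rowLen_zero {μ : YoungDiagram} {i j : ℕ} (h : (i, j) ∈ μ) :
    i < μ.colLen 0 ∧ j < μ.rowLen 0 :=
  ⟨(mem_iff_lt_colLen.1 h).trans_le (μ.colLen_anti 0 j j.zero_le),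
    (mem_iff_lt_rowLen.1 h).trans_le (μ.rowLen_anti 0 i i.zero_le)⟩

theorem rowLen_eq_of_mem_iff {μ : YoungDiagram} {i n : ℕ} (h : ∀ j, (i, j) ∈ μ ↔ j < n) :
    μ.rowLen i = n :=
  eq_of_forall_lt_iff fun j => by rw [← mem_iff_lt_rowLen, h]

/-- Cells of the row-wise sum; the product of ranges only serves as a finite ambient set. -/
def addCells (μ ν : YoungDiagram) : Finset (ℕ × ℕ) :=
  {p ∈ range (μ.colLen 0 + ν.colLen 0) ×ˢ range (μ.rowLen 0 + ν.rowLen 0) |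
    p.2 < μ.rowLen p.1 + ν.rowLen p.1}

theorem mem_addCells {μ ν : YoungDiagram} {i j : ℕ} :
    (i, j) ∈ addCells μ ν ↔ j < μ.rowLen i + ν.rowLen i := by
  simp only [addCells, mem_filter, mem_product, mem_range, and_iff_right_iff_imp]
  intro hj
  have := μ.rowLen_anti 0 i i.zero_le
  have := ν.rowLen_anti 0 i i.zero_le
  rcases Nat.eq_zero_or_pos (μ.rowLen i) with hμ | hμ
  · have := rowLen_pos_iff.1 (show 0 < ν.rowLen i by omega)
    omega
  · have := rowLen_pos_iff.1 hμ
    omega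

instance : Add YoungDiagram where
  add μ ν :=
    { cells := addCells μ ν
      isLowerSet := by
        rintro ⟨i, j⟩ ⟨i', j'⟩ ⟨hi, hj⟩ h
        simp only [mem_coe, mem_addCells] at h ⊢
        have := μ.rowLen_anti i' i hi
        have := ν.rowLen_anti i' i hi
        omega }

theorem rowLen_add (μ ν : YoungDiagram) (i : ℕ) :
    (μ + ν).rowLen i = μ.rowLen i + ν.rowLen i :=
  rowLen_eq_of_mem_iff fun _ => mem_addCells

instance : Zero YoungDiagram := ⟨⊥⟩

theorem rowLen_zero (i : ℕ) : (0 : YoungDiagram).rowLen i = 0 :=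
  rowLen_eq_of_mem_iff fun j => iff_of_false (notMem_bot _) j.not_lt_zero

instance : AddCommMonoid YoungDiagram where
  add_assoc _ _ _ := ext_rowLen fun _ => by simp only [rowLen_add, add_assoc]
  zero_add _ := ext_rowLen fun _ => by simp only [rowLen_add, rowLen_zero, zero_add]
  add_zero _ := ext_rowLen fun _ => by simp only [rowLen_add, rowLen_zero, add_zero]
  add_comm _ _ := ext_rowLen fun _ => by simp only [rowLen_add, add_comm]
  nsmul := nsmulRec

theorem rowLen_nsmul (k : ℕ) (μ : YoungDiagram) (i : ℕ) :
    (k • μ).rowLen i = k * μ.rowLen i := by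
  induction k with
  | zero => rw [zero_nsmul, rowLen_zero, zero_mul]
  | succ k ih => rw [succ_nsmul, rowLen_add, ih, Nat.succ_mul]

theorem colLen_zero_add (μ ν : YoungDiagram) :
    (μ + ν).colLen 0 = max (μ.colLen 0) (ν.colLen 0) :=
  eq_of_forall_lt_iff fun i => by
    rw [lt_max_iff, ← rowLen_pos_iff, ← rowLen_pos_iff, ← rowLen_pos_iff, rowLen_add]
    omega

end YoungDiagram

theorem natCard_eq_sum_card_row {P : ℕ → ℕ → Prop} [∀ i, DecidablePred (P i)] {R C : ℕ}
    (hP : ∀ i j, P i j → i < R ∧ j < C) :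
    Nat.card {p : ℕ × ℕ // P p.1 p.2} = ∑ i ∈ range R, #{j ∈ range C | P i j} := by
  have : Nat.card {p : ℕ × ℕ // P p.1 p.2} = #{p ∈ range R ×ˢ range C | P p.1 p.2} := by
    rw [← Nat.card_eq_finsetCard]
    refine Nat.card_congr (Equiv.subtypeEquivRight fun p => ?_)
    simp only [mem_filter, mem_product, mem_range]
    exact ⟨fun h => ⟨hP _ _ h, h⟩, And.right⟩
  simp only [this, card_filter, sum_product]

theorem natCard_region_eq {T : ℕ → ℕ → ℕ} {C : ℕ} (hT : ∀ i j, T i j ≠ 0 → j < C)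
    (i j v : ℕ) :
    Nat.card {p : ℕ × ℕ // (p.1 < i ∨ (p.1 = i ∧ j ≤ p.2)) ∧ T p.1 p.2 = v + 1} =
      ∑ r ∈ range i, #{c ∈ range C | T r c = v + 1} + #{c ∈ range C | j ≤ c ∧ T i c = v + 1} := by
  rw [natCard_eq_sum_card_row (P := fun r c => (r < i ∨ (r = i ∧ j ≤ c)) ∧ T r c = v + 1)
    (R := i + 1) fun r c h => ⟨by omega, hT r c (by omega)⟩, sum_range_succ]
  congr 1
  · refine sum_congr rfl fun r hr => ?_
    have := mem_range.1 hr
    congr 1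
    exact filter_congr fun c _ => by simp only [this, true_or, true_and]
  · exact congrArg card <| filter_congr fun c _ => by simp

theorem Finset.eq_Ico_card {s : Finset ℕ} {a : ℕ} (h : ∀ j ∈ s, a ≤ j ∧ Icc a j ⊆ s) :
    s = Ico a (a + #s) := by
  refine eq_of_subset_of_card_le (fun j hj => mem_Ico.2 ⟨(h j hj).1, ?_⟩) (by simp)
  have := card_le_card (h j hj).2
  rw [Nat.card_Icc] at this
  omega

theorem Nat.find_eq_iff_of_monotone {b : ℕ → ℕ} (hb : Monotone b) {j : ℕ} (h0 : b 0 ≤ j)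
    (h : ∃ k, j < b (k + 1)) (k : ℕ) : Nat.find h = k ↔ b k ≤ j ∧ j < b (k + 1) := by
  rw [Nat.find_eq_iff, and_comm (a := b k ≤ j)]
  refine and_congr_right fun _ => ⟨fun hlt => ?_, fun hk n hn => not_lt.2 ((hb hn).trans hk)⟩
  rcases k with _ | k
  · exact h0
  · exact not_lt.1 (hlt k k.lt_succ_self)

/-- If `m i v` counts the entries `v + 1` in row `i` of a semistandard filling of `μ/α`, the
entries `≤ k` of row `i` occupy exactly the columns `[α.rowLen i, rowEdge α m i k)`. -/
def rowEdge (α : YoungDiagram) (m : ℕ → ℕ → ℕ) (i k : ℕ) : ℕ :=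
  α.rowLen i + ∑ v ∈ range k, m i v

theorem rowEdge_zero (α : YoungDiagram) (m : ℕ → ℕ → ℕ) (i : ℕ) :
    rowEdge α m i 0 = α.rowLen i := by
  simp [rowEdge]

theorem rowEdge_succ (α : YoungDiagram) (m : ℕ → ℕ → ℕ) (i k : ℕ) :
    rowEdge α m i (k + 1) = rowEdge α m i k + m i k := by
  rw [rowEdge, rowEdge, sum_range_succ, add_assoc]

theorem rowLen_le_rowEdge (α : YoungDiagram) (m : ℕ → ℕ → ℕ) (i k : ℕ) :
    α.rowLen i ≤ rowEdge α m i k :=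
  Nat.le_add_right _ _

theorem rowEdge_mono (α : YoungDiagram) (m : ℕ → ℕ → ℕ) (i : ℕ) : Monotone (rowEdge α m i) :=
  fun _ _ hk => Nat.add_le_add_left (sum_le_sum_of_subset (range_subset_range.2 hk)) _

theorem rowEdge_add (α α' : YoungDiagram) (m m' : ℕ → ℕ → ℕ) (i k : ℕ) :
    rowEdge (α + α') (m + m') i k = rowEdge α m i k + rowEdge α' m' i k := by
  simp only [rowEdge, YoungDiagram.rowLen_add, Pi.add_apply, sum_add_distrib]
  omega

/-- The row counts `m` of an LR filling of `μ/α` with content `β`, in the form of linear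
conditions; unlike fillings themselves, these are visibly stable under addition. -/
structure IsLRCounts (α β μ : YoungDiagram) (m : ℕ → ℕ → ℕ) : Prop where
  rowEdge_eq_rowLen : ∀ i K, β.colLen 0 ≤ K → rowEdge α m i K = μ.rowLen i
  /-- column strictness: an entry `≤ k + 1` lies below a blank or an entry `≤ k` -/
  rowEdge_succ_le : ∀ i₁ i₂ k, i₁ < i₂ → rowEdge α m i₂ (k + 1) ≤ rowEdge α m i₁ k
  /-- the lattice-word condition where it is tightest: after the `k + 2`s of row `i` -/
  ballot : ∀ i k, ∑ r ∈ range (i + 1), m r (k + 1) ≤ ∑ r ∈ range i, m r k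
  content : ∀ k R, μ.colLen 0 ≤ R → ∑ r ∈ range R, m r k = β.rowLen k

theorem IsLRCounts.add {α β μ α' β' μ' : YoungDiagram} {m m' : ℕ → ℕ → ℕ}
    (h : IsLRCounts α β μ m) (h' : IsLRCounts α' β' μ' m') :
    IsLRCounts (α + α') (β + β') (μ + μ') (m + m') where
  rowEdge_eq_rowLen i K hK := by
    rw [YoungDiagram.colLen_zero_add, max_le_iff] at hK
    rw [rowEdge_add, h.rowEdge_eq_rowLen i K hK.1, h'.rowEdge_eq_rowLen i K hK.2,
      YoungDiagram.rowLen_add]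
  rowEdge_succ_le i₁ i₂ k hi := by
    rw [rowEdge_add, rowEdge_add]
    exact Nat.add_le_add (h.rowEdge_succ_le i₁ i₂ k hi) (h'.rowEdge_succ_le i₁ i₂ k hi)
  ballot i k := by
    simp only [Pi.add_apply, sum_add_distrib]
    exact Nat.add_le_add (h.ballot i k) (h'.ballot i k)
  content k R hR := by
    rw [YoungDiagram.colLen_zero_add, max_le_iff] at hR
    simp only [Pi.add_apply, sum_add_distrib]
    rw [h.content k R hR.1, h'.content k R hR.2, YoungDiagram.rowLen_add]

namespace LRFilling

variable {α β μ : YoungDiagram} (F : LRFilling α β μ)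

theorem T_ne_zero_iff {i j : ℕ} : F.T i j ≠ 0 ↔ α.rowLen i ≤ j ∧ j < μ.rowLen i := by
  rw [F.supp, mem_iff_lt_rowLen, mem_iff_lt_rowLen, not_lt, and_comm]

theorem lt_colLen_zero_and_lt_rowLen_zero {i j : ℕ} (h : F.T i j ≠ 0) :
    i < μ.colLen 0 ∧ j < μ.rowLen 0 :=
  YoungDiagram.lt_colLen_zero_and_lt_rowLen_zero ((F.supp i j).1 h).1

noncomputable def rowCount (i v : ℕ) : ℕ := #{j ∈ range (μ.rowLen 0) | F.T i j = v + 1}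

theorem natCard_T_eq {R : ℕ} (hR : μ.colLen 0 ≤ R) (v : ℕ) :
    Nat.card {p : ℕ × ℕ // F.T p.1 p.2 = v + 1} = ∑ i ∈ range R, F.rowCount i v :=
  natCard_eq_sum_card_row (P := fun i j => F.T i j = v + 1) fun i j h =>
    (F.lt_colLen_zero_and_lt_rowLen_zero (i := i) (j := j) (by omega)).imp_left
      (·.trans_le hR)

theorem lt_colLen_of_T_eq {i j v : ℕ} (h : F.T i j = v + 1) : v < β.colLen 0 := by
  have hj : j ∈ range (μ.rowLen 0) :=
    mem_range.2 (F.lt_colLen_zero_and_lt_rowLen_zero (i := i) (by omega)).2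
  have hi : i ∈ range (μ.colLen 0) :=
    mem_range.2 (F.lt_colLen_zero_and_lt_rowLen_zero (j := j) (by omega)).1
  rw [← YoungDiagram.rowLen_pos_iff, ← F.content, F.natCard_T_eq le_rfl]
  exact lt_of_lt_of_le (card_pos.2 ⟨j, mem_filter.2 ⟨hj, h⟩⟩)
    (single_le_sum (f := fun i => F.rowCount i v) (fun _ _ => Nat.zero_le _) hi)

theorem T_le_colLen (i j : ℕ) : F.T i j ≤ β.colLen 0 := by
  by_cases h : F.T i j = 0
  · rw [h]
    exact Nat.zero_le _
  · obtain ⟨v, hv⟩ := Nat.exists_eq_add_one_of_ne_zero h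
    rw [hv]
    exact F.lt_colLen_of_T_eq hv

theorem filter_T_le_eq_Ico (i k : ℕ) :
    {j ∈ range (μ.rowLen 0) | F.T i j ≠ 0 ∧ F.T i j ≤ k} =
      Ico (α.rowLen i) (rowEdge α F.rowCount i k) := by
  set s := {j ∈ range (μ.rowLen 0) | F.T i j ≠ 0 ∧ F.T i j ≤ k}
  have hcard : #s = ∑ v ∈ range k, F.rowCount i v := by
    rw [card_eq_sum_card_fiberwise (f := fun j => F.T i j - 1) (t := range k)
      fun j hj => by simp only [s, mem_coe, mem_filter, mem_range] at hj ⊢; omega]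
    refine sum_congr rfl fun v hv => ?_
    rw [rowCount, filter_filter]
    exact congrArg card <| filter_congr fun j _ => by have := mem_range.1 hv; omega
  rw [rowEdge, ← hcard]
  refine eq_Ico_card fun j hj => ?_
  simp only [s, mem_filter, mem_range] at hj
  have hrow := (F.T_ne_zero_iff).1 hj.2.1
  refine ⟨hrow.1, fun j' hj' => ?_⟩
  rw [mem_Icc] at hj'
  have hne : F.T i j' ≠ 0 := F.T_ne_zero_iff.2 ⟨hj'.1, hj'.2.trans_lt hrow.2⟩
  simp only [s, mem_filter, mem_range]
  exact ⟨hj'.2.trans_lt hj.1, hne, (F.rows_weak i j' j hj'.2 hne hj.2.1).trans hj.2.2⟩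

theorem T_ne_zero_and_le_iff {i j k : ℕ} :
    F.T i j ≠ 0 ∧ F.T i j ≤ k ↔ α.rowLen i ≤ j ∧ j < rowEdge α F.rowCount i k := by
  rw [← mem_Ico, ← F.filter_T_le_eq_Ico, mem_filter, mem_range, iff_and_self]
  exact fun h => (F.lt_colLen_zero_and_lt_rowLen_zero h.1).2

theorem T_eq_succ_iff {i j k : ℕ} :
    F.T i j = k + 1 ↔ rowEdge α F.rowCount i k ≤ j ∧ j < rowEdge α F.rowCount i (k + 1) := by
  have hk := F.T_ne_zero_and_le_iff (i := i) (j := j) (k := k)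
  have hk' := F.T_ne_zero_and_le_iff (i := i) (j := j) (k := k + 1)
  have := rowLen_le_rowEdge α F.rowCount i k
  omega

theorem rowEdge_rowCount_eq_rowLen {K : ℕ} (hK : β.colLen 0 ≤ K) (i : ℕ) :
    rowEdge α F.rowCount i K = μ.rowLen i := by
  have hαμ := YoungDiagram.le_iff_rowLen_le.1 F.sub i
  have hαe := rowLen_le_rowEdge α F.rowCount i K
  refine eq_of_forall_lt_iff fun j => ?_
  have hle := F.T_ne_zero_and_le_iff (i := i) (j := j) (k := K)
  have hne := F.T_ne_zero_iff (i := i) (j := j)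
  have := (F.T_le_colLen i j).trans hK
  omega

theorem rowEdge_rowCount_succ_le {i₁ i₂ : ℕ} (hi : i₁ < i₂) (k : ℕ) :
    rowEdge α F.rowCount i₂ (k + 1) ≤ rowEdge α F.rowCount i₁ k := by
  set j := rowEdge α F.rowCount i₁ k
  by_contra! hj
  have hα := α.rowLen_anti i₁ i₂ hi.le
  have hαj := rowLen_le_rowEdge α F.rowCount i₁ k
  obtain ⟨hne₂, hle₂⟩ := F.T_ne_zero_and_le_iff.2 ⟨hα.trans hαj, hj⟩
  have hne₁ : F.T i₁ j ≠ 0 :=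
    F.T_ne_zero_iff.2 ⟨hαj, (F.T_ne_zero_iff.1 hne₂).2.trans_le (μ.rowLen_anti i₁ i₂ hi.le)⟩
  have hlt := F.cols_strict i₁ i₂ j hi hne₁ hne₂
  exact (F.T_ne_zero_and_le_iff.1 ⟨hne₁, Nat.le_of_lt_succ (hlt.trans_le hle₂)⟩).2.false

theorem rowCount_ballot (i k : ℕ) :
    ∑ r ∈ range (i + 1), F.rowCount r (k + 1) ≤ ∑ r ∈ range i, F.rowCount r k := by
  -- reading row `i` from the right down to column `e`, all its `k + 2`s and none of its `k + 1`s
  set e := rowEdge α F.rowCount i (k + 1)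
  have hC : ∀ i j, F.T i j ≠ 0 → j < μ.rowLen 0 :=
    fun _ _ h => (F.lt_colLen_zero_and_lt_rowLen_zero h).2
  have hb := F.ballot i e k
  rw [natCard_region_eq hC i e k] at hb
  rw [natCard_region_eq hC i e (k + 1)] at hb
  have hsucc : #{c ∈ range (μ.rowLen 0) | e ≤ c ∧ F.T i c = k + 2} = F.rowCount i (k + 1) :=
    congrArg card <| filter_congr fun c _ =>
      and_iff_right_of_imp fun h => (F.T_eq_succ_iff.1 h).1
  have hzero : #{c ∈ range (μ.rowLen 0) | e ≤ c ∧ F.T i c = k + 1} = 0 :=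
    card_eq_zero.2 <| filter_eq_empty_iff.2 fun c _ ⟨hc, h⟩ =>
      (hc.trans_lt (F.T_eq_succ_iff.1 h).2).false
  rw [hsucc, hzero, add_zero] at hb
  rw [sum_range_succ]
  exact hb

theorem isLRCounts : IsLRCounts α β μ F.rowCount where
  rowEdge_eq_rowLen i _ hK := F.rowEdge_rowCount_eq_rowLen hK i
  rowEdge_succ_le _ _ k hi := F.rowEdge_rowCount_succ_le hi k
  ballot := F.rowCount_ballot
  content k _ hR := by rw [← F.natCard_T_eq hR, F.content]

end LRFilling

namespace IsLRCounts

variable {α β μ : YoungDiagram} {m : ℕ → ℕ → ℕ}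

theorem rowEdge_le_rowLen (h : IsLRCounts α β μ m) (i k : ℕ) : rowEdge α m i k ≤ μ.rowLen i :=
  (rowEdge_mono α m i (le_max_left k (β.colLen 0))).trans_eq
    (h.rowEdge_eq_rowLen i _ (le_max_right _ _))

theorem exists_lt_rowEdge (h : IsLRCounts α β μ m) {i j : ℕ} (hj : j < μ.rowLen i) :
    ∃ k, j < rowEdge α m i (k + 1) :=
  ⟨β.colLen 0, by rwa [h.rowEdge_eq_rowLen i _ (Nat.le_succ _)]⟩

variable (h : IsLRCounts α β μ m)

noncomputable def entry (i j : ℕ) : ℕ :=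
  if hj : α.rowLen i ≤ j ∧ j < μ.rowLen i then Nat.find (h.exists_lt_rowEdge hj.2) + 1 else 0

theorem entry_ne_zero_iff {i j : ℕ} : h.entry i j ≠ 0 ↔ α.rowLen i ≤ j ∧ j < μ.rowLen i := by
  unfold entry
  split_ifs with hj <;> simp [hj]

theorem entry_eq_succ_iff {i j k : ℕ} :
    h.entry i j = k + 1 ↔ rowEdge α m i k ≤ j ∧ j < rowEdge α m i (k + 1) := by
  unfold entry
  split_ifs with hj
  · rw [Nat.add_right_cancel_iff, Nat.find_eq_iff_of_monotone (rowEdge_mono α m i)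
      ((rowEdge_zero α m i).trans_le hj.1)]
  · refine iff_of_false (by simp) fun hk => hj ?_
    exact ⟨(rowLen_le_rowEdge α m i k).trans hk.1, hk.2.trans_le (h.rowEdge_le_rowLen i _)⟩

theorem entry_le_entry {i j₁ j₂ : ℕ} (hj : j₁ ≤ j₂) (h₁ : h.entry i j₁ ≠ 0)
    (h₂ : h.entry i j₂ ≠ 0) : h.entry i j₁ ≤ h.entry i j₂ := by
  obtain ⟨w, hw⟩ := Nat.exists_eq_add_one_of_ne_zero h₁
  obtain ⟨v, hv⟩ := Nat.exists_eq_add_one_of_ne_zero h₂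
  rw [hw, hv, Nat.add_le_add_iff_right]
  by_contra! hvw
  have := rowEdge_mono α m i (show v + 1 ≤ w from hvw)
  have := (h.entry_eq_succ_iff.1 hw).1
  have := (h.entry_eq_succ_iff.1 hv).2
  omega

theorem entry_lt_entry {i₁ i₂ j : ℕ} (hi : i₁ < i₂) (h₁ : h.entry i₁ j ≠ 0)
    (h₂ : h.entry i₂ j ≠ 0) : h.entry i₁ j < h.entry i₂ j := by
  obtain ⟨w, hw⟩ := Nat.exists_eq_add_one_of_ne_zero h₁
  obtain ⟨v, hv⟩ := Nat.exists_eq_add_one_of_ne_zero h₂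
  rw [hw, hv, Nat.add_lt_add_iff_right]
  by_contra! hvw
  have := rowEdge_mono α m i₁ (show v ≤ w from hvw)
  have := h.rowEdge_succ_le i₁ i₂ v hi
  have := (h.entry_eq_succ_iff.1 hw).1
  have := (h.entry_eq_succ_iff.1 hv).2
  omega

theorem lt_colLen_zero_and_lt_rowLen_zero {i j : ℕ} (hij : h.entry i j ≠ 0) :
    i < μ.colLen 0 ∧ j < μ.rowLen 0 :=
  YoungDiagram.lt_colLen_zero_and_lt_rowLen_zero
    (mem_iff_lt_rowLen.2 (h.entry_ne_zero_iff.1 hij).2)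

theorem card_filter_entry_eq (i v : ℕ) :
    #{j ∈ range (μ.rowLen 0) | h.entry i j = v + 1} = m i v := by
  have : {j ∈ range (μ.rowLen 0) | h.entry i j = v + 1} =
      Ico (rowEdge α m i v) (rowEdge α m i (v + 1)) := by
    ext j
    simp only [mem_filter, mem_range, mem_Ico, h.entry_eq_succ_iff, and_iff_right_iff_imp]
    exact fun hj => hj.2.trans_le ((h.rowEdge_le_rowLen i _).trans (μ.rowLen_anti 0 i i.zero_le))
  rw [this, Nat.card_Ico, rowEdge_succ, Nat.add_sub_cancel_left]

noncomputable def toLRFilling : LRFilling α β μ where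
  sub := YoungDiagram.le_iff_rowLen_le.2 fun i =>
    (rowLen_le_rowEdge α m i 0).trans (h.rowEdge_le_rowLen i 0)
  T := h.entry
  supp i j := by rw [h.entry_ne_zero_iff, mem_iff_lt_rowLen, mem_iff_lt_rowLen, not_lt, and_comm]
  rows_weak _ _ _ := h.entry_le_entry
  cols_strict _ _ _ := h.entry_lt_entry
  content k := by
    rw [natCard_eq_sum_card_row (P := fun i j => h.entry i j = k + 1)
      fun i j hij => h.lt_colLen_zero_and_lt_rowLen_zero (by omega)]
    simp only [h.card_filter_entry_eq]
    exact h.content k _ le_rfl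
  ballot i j k := by
    have hC : ∀ i j, h.entry i j ≠ 0 → j < μ.rowLen 0 :=
      fun _ _ hij => (h.lt_colLen_zero_and_lt_rowLen_zero hij).2
    rw [natCard_region_eq hC i j (k + 1), natCard_region_eq hC i j k]
    simp only [h.card_filter_entry_eq]
    calc ∑ r ∈ range i, m r (k + 1) + #{c ∈ range (μ.rowLen 0) | j ≤ c ∧ h.entry i c = k + 2}
        ≤ ∑ r ∈ range (i + 1), m r (k + 1) := by
          rw [sum_range_succ, ← h.card_filter_entry_eq]
          exact Nat.add_le_add_left (card_le_card (monotone_filter_right _ fun _ _ h => h.2)) _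
      _ ≤ ∑ r ∈ range i, m r k := h.ballot i k
      _ ≤ _ := Nat.le_add_right _ _

end IsLRCounts

namespace LRFilling

variable {α β μ : YoungDiagram}

/-- Row by row, the entries of `F` and `F'` merged into weakly increasing order. -/
noncomputable def add {α' β' μ' : YoungDiagram} (F : LRFilling α β μ)
    (F' : LRFilling α' β' μ') : LRFilling (α + α') (β + β') (μ + μ') :=
  (F.isLRCounts.add F'.isLRCounts).toLRFilling

theorem ext {F G : LRFilling α β μ} (h : F.T = G.T) : F = G := by
  cases F
  cases G
  cases h
  rfl

theorem mem_iff_T_eq_zero (F : LRFilling α β μ) {i j : ℕ} :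
    (i, j) ∈ α ↔ (i, j) ∈ μ ∧ F.T i j = 0 := by
  have := YoungDiagram.le_iff_rowLen_le.1 F.sub i
  have := F.T_ne_zero_iff (i := i) (j := j)
  rw [mem_iff_lt_rowLen, mem_iff_lt_rowLen]
  omega

theorem eq_of_T_eq {α' β' : YoungDiagram} {F : LRFilling α β μ} {G : LRFilling α' β' μ}
    (h : F.T = G.T) : α = α' ∧ β = β' := by
  refine ⟨?_, YoungDiagram.ext_rowLen fun k => by rw [← F.content, ← G.content, h]⟩
  ext ⟨i, j⟩
  simp only [mem_cells, F.mem_iff_T_eq_zero, G.mem_iff_T_eq_zero, h]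

theorem colLen_le_card (F : LRFilling α β μ) : β.colLen 0 ≤ #μ.cells := by
  have : ∀ v ∈ range (β.colLen 0), ∃ p ∈ μ.cells, F.T p.1 p.2 = v + 1 := by
    intro v hv
    have hpos : Nat.card {p : ℕ × ℕ // F.T p.1 p.2 = v + 1} ≠ 0 := by
      rw [F.content]
      exact (YoungDiagram.rowLen_pos_iff.2 (mem_range.1 hv)).ne'
    obtain ⟨⟨p, hp⟩⟩ := (Nat.card_ne_zero.1 hpos).1
    exact ⟨p, (mem_cells p).2 ((F.supp p.1 p.2).1 (by omega)).1, hp⟩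
  choose! g hgμ hgT using this
  simpa using card_le_card_of_injOn g hgμ fun v hv w hw hvw => by
    have := hgT v hv
    have := hgT w hw
    simp_all

theorem T_lt_card (F : LRFilling α β μ) (i j : ℕ) : F.T i j < #μ.cells + 1 :=
  Nat.lt_succ_of_le ((F.T_le_colLen i j).trans F.colLen_le_card)

/-- The entries of `F` on the cells of `μ`; they determine `F`, and take finitely many values. -/
def code (F : LRFilling α β μ) : μ.cells → Fin (#μ.cells + 1) :=
  fun p => ⟨F.T p.1.1 p.1.2, F.T_lt_card _ _⟩

theorem T_eq_of_code_eq {α' β' : YoungDiagram} {F : LRFilling α β μ} {G : LRFilling α' β' μ}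
    (h : F.code = G.code) : F.T = G.T := by
  funext i j
  by_cases hij : (i, j) ∈ μ
  · exact congrArg Fin.val (congrFun h ⟨(i, j), (mem_cells _).2 hij⟩)
  · rw [not_not.1 (mt (fun h => ((F.supp i j).1 h).1) hij),
      not_not.1 (mt (fun h => ((G.supp i j).1 h).1) hij)]

end LRFilling

instance (μ ν lam : YoungDiagram) :
    Finite (Σ α β γ : YoungDiagram, LRFilling α β μ × LRFilling α γ ν × LRFilling β γ lam) := by
  refine Finite.of_injective (fun x => (x.2.2.2.1.code, x.2.2.2.2.1.code, x.2.2.2.2.2.code)) ?_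
  rintro ⟨α, β, γ, F₁, F₂, F₃⟩ ⟨α', β', γ', G₁, G₂, G₃⟩ h
  simp only [Prod.mk.injEq] at h
  obtain ⟨h₁, h₂, h₃⟩ := h
  obtain ⟨rfl, rfl⟩ := LRFilling.eq_of_T_eq (LRFilling.T_eq_of_code_eq h₁)
  obtain ⟨-, rfl⟩ := LRFilling.eq_of_T_eq (LRFilling.T_eq_of_code_eq h₂)
  rw [LRFilling.ext (LRFilling.T_eq_of_code_eq h₁), LRFilling.ext (LRFilling.T_eq_of_code_eq h₂),
    LRFilling.ext (LRFilling.T_eq_of_code_eq h₃)]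

theorem NL_pos_iff {μ ν lam : YoungDiagram} :
    0 < NL μ ν lam ↔ ∃ α β γ, Nonempty (LRFilling α β μ) ∧ Nonempty (LRFilling α γ ν) ∧
      Nonempty (LRFilling β γ lam) := by
  simp only [NL, Nat.card_pos_iff, nonempty_sigma, nonempty_prod,
    and_iff_left (inferInstance : Finite _)]

theorem NL_pos_add {μ ν lam μ' ν' lam' : YoungDiagram} (h : 0 < NL μ ν lam)
    (h' : 0 < NL μ' ν' lam') : 0 < NL (μ + μ') (ν + ν') (lam + lam') := by
  obtain ⟨α, β, γ, ⟨F₁⟩, ⟨F₂⟩, ⟨F₃⟩⟩ := NL_pos_iff.1 h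
  obtain ⟨α', β', γ', ⟨G₁⟩, ⟨G₂⟩, ⟨G₃⟩⟩ := NL_pos_iff.1 h'
  exact NL_pos_iff.2 ⟨α + α', β + β', γ + γ', ⟨F₁.add G₁⟩, ⟨F₂.add G₂⟩, ⟨F₃.add G₃⟩⟩

theorem NL_pos_nsmul {μ ν lam : YoungDiagram} {k : ℕ} (hk : k ≠ 0) (h : 0 < NL μ ν lam) :
    0 < NL (k • μ) (k • ν) (k • lam) := by
  induction k, Nat.one_le_iff_ne_zero.2 hk using Nat.le_induction with
  | base => simpa only [one_smul] using h
  | succ k _ ih => simpa only [succ_nsmul] using NL_pos_add (ih (by omega)) h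

/-- `NL_n = {(μ,ν,lam) ∈ Par_n³ : N_{μ,ν,lam} > 0}` is closed under
componentwise (row-wise) addition of triples, i.e. it is a semigroup; in particular
`N_{μ,ν,lam} > 0` implies `N_{kμ,kν,klam} > 0` for every `k ≥ 1`.  (`Par_n` = partitions
with at most `n` parts; the sum/scaling partitions are specified by their row lengths.) -/
theorem NL_semigroup :
    (∀ (n : ℕ) (μ ν lam μ' ν' lam' σ τ ρ : YoungDiagram),
      μ.colLen 0 ≤ n → ν.colLen 0 ≤ n → lam.colLen 0 ≤ n →
      μ'.colLen 0 ≤ n → ν'.colLen 0 ≤ n → lam'.colLen 0 ≤ n →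
      (∀ i, σ.rowLen i = μ.rowLen i + μ'.rowLen i) →
      (∀ i, τ.rowLen i = ν.rowLen i + ν'.rowLen i) →
      (∀ i, ρ.rowLen i = lam.rowLen i + lam'.rowLen i) →
      0 < NL μ ν lam → 0 < NL μ' ν' lam' → 0 < NL σ τ ρ) ∧
    (∀ (n k : ℕ), 0 < k → ∀ (μ ν lam σ τ ρ : YoungDiagram),
      μ.colLen 0 ≤ n → ν.colLen 0 ≤ n → lam.colLen 0 ≤ n →
      (∀ i, σ.rowLen i = k * μ.rowLen i) →
      (∀ i, τ.rowLen i = k * ν.rowLen i) →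
      (∀ i, ρ.rowLen i = k * lam.rowLen i) →
      0 < NL μ ν lam → 0 < NL σ τ ρ) := by
  refine ⟨fun _ μ ν lam μ' ν' lam' σ τ ρ _ _ _ _ _ _ hσ hτ hρ h h' => ?_,
    fun _ k hk μ ν lam σ τ ρ _ _ _ hσ hτ hρ h => ?_⟩
  · obtain rfl : σ = μ + μ' := ext_rowLen fun i => by rw [hσ, rowLen_add]
    obtain rfl : τ = ν + ν' := ext_rowLen fun i => by rw [hτ, rowLen_add]
    obtain rfl : ρ = lam + lam' := ext_rowLen fun i => by rw [hρ, rowLen_add]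
    exact NL_pos_add h h'
  · obtain rfl : σ = k • μ := ext_rowLen fun i => by rw [hσ, rowLen_nsmul]
    obtain rfl : τ = k • ν := ext_rowLen fun i => by rw [hτ, rowLen_nsmul]
    obtain rfl : ρ = k • lam := ext_rowLen fun i => by rw [hρ, rowLen_nsmul]
    exact NL_pos_nsmul hk.ne' h
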